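/- Let Θ = (θ₁, θ₂) with 1, θ₁, θ₂ linearly independent over ℚ, let α = 2/3, β = 1/3, and let m_ν = (m_{ν,1}, m_{ν,2}) be the best approximation vectors. If inf over ν of ‖η₁m_{ν,1} + η₂m_{ν,2}‖ = γ > 0 and ζ_ν M_{ν+1}³ ≤ 1 holds for all ν, then inf_{q∈ℤ₊} max(q^{2/3}‖qθ₁−η₁‖, q^{1/3}‖qθ₂−η₂‖) > 0. -/

import Mathlib

open scoped BigOperators

/-- Distance from a real number to the nearest integer. -/
noncomputable def dni (x : ℝ) : ℝ := |x - round x|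

/-- `1, θ₁, θ₂` are linearly independent over `ℚ` (equivalently over `ℤ`). -/
def LinIndep (θ₁ θ₂ : ℝ) : Prop :=
  ∀ a b c : ℤ, (a : ℝ) + (b : ℝ) * θ₁ + (c : ℝ) * θ₂ = 0 → a = 0 ∧ b = 0 ∧ c = 0

/-- The weighted size `max(|m₁|, |m₂|²)` of an integer vector. -/
noncomputable def wsize (m : ℤ × ℤ) : ℝ := max |(m.1 : ℝ)| ((m.2 : ℝ) ^ 2)

/-- The value of the linear form `‖θ₁ m₁ + θ₂ m₂‖`. -/
noncomputable def zeta (θ₁ θ₂ : ℝ) (m : ℤ × ℤ) : ℝ := dni (θ₁ * m.1 + θ₂ * m.2)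

/-- `M = √(max(|m₁|, |m₂|²))`. -/
noncomputable def Mval (m : ℤ × ℤ) : ℝ := Real.sqrt (wsize m)

/-- `m = (m₁, m₂)` is a best approximation vector for `(θ₁, θ₂)` w.r.t. the
weighted norm `max(|x₁|, |x₂|²)`. -/
def IsBestApprox (θ₁ θ₂ : ℝ) (m : ℤ × ℤ) : Prop :=
  m ≠ 0 ∧ ∃ m₀ : ℤ,
    |(m₀ : ℝ) + θ₁ * m.1 + θ₂ * m.2| = zeta θ₁ θ₂ m ∧
    ∀ x₀ x₁ x₂ : ℤ,
      max |(x₁ : ℝ)| ((x₂ : ℝ) ^ 2) ≤ wsize m →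
      |(x₀ : ℝ) + θ₁ * x₁ + θ₂ * x₂| ≤ zeta θ₁ θ₂ m →
      ((x₀, x₁, x₂) = ((0 : ℤ), (0 : ℤ), (0 : ℤ)) ∨
        (x₀, x₁, x₂) = (m₀, m.1, m.2) ∨ (x₀, x₁, x₂) = (-m₀, -m.1, -m.2))

/-- An enumeration `m : ℕ → ℤ × ℤ` of all the best approximation vectors of
`(θ₁, θ₂)`, ordered so that `M_ν` is strictly increasing (each best
approximation appears up to sign). -/
def IsBestApproxSeq (θ₁ θ₂ : ℝ) (m : ℕ → ℤ × ℤ) : Prop :=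
  (∀ ν, IsBestApprox θ₁ θ₂ (m ν)) ∧
  (StrictMono fun ν => Mval (m ν)) ∧
  (∀ p : ℤ × ℤ, IsBestApprox θ₁ θ₂ p → ∃ ν, p = m ν ∨ p = -(m ν))

/-- `(η₁, η₂)` belongs to `BAD^Θ(2/3, 1/3)`. -/
def BADT (θ₁ θ₂ η₁ η₂ : ℝ) : Prop :=
  ∃ c > 0, ∀ q : ℕ, 0 < q →
    c ≤ max ((q : ℝ) ^ ((2 : ℝ) / 3) * dni (q * θ₁ - η₁))
          ((q : ℝ) ^ ((1 : ℝ) / 3) * dni (q * θ₂ - η₂))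


private lemma dni_le_abs (x : ℝ) (n : ℤ) : dni x ≤ |x - n| := by
  unfold dni
  rcases eq_or_ne n (round x) with h | h
  · rw [h]
  · have h1 : (1:ℝ) ≤ |(n:ℝ) - round x| := by
      have := Int.one_le_abs (sub_ne_zero.mpr h)
      calc (1:ℝ) ≤ ((|n - round x| : ℤ) : ℝ) := by exact_mod_cast this
        _ = |(n:ℝ) - round x| := by push_cast; ring_nf
    have h2 : |x - round x| ≤ 1/2 := abs_sub_round x
    have h3 : |(n:ℝ) - round x| ≤ |x - n| + |x - round x| := by
      have he : (n:ℝ) - round x = (x - round x) - (x - n) := by ring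
      rw [he]
      calc |(x - round x) - (x - n)| ≤ |x - round x| + |x - n| := abs_sub _ _
        _ = |x - n| + |x - round x| := by ring
    linarith

private lemma dni_add_int (x : ℝ) (n : ℤ) : dni (x + n) = dni x := by
  unfold dni
  rw [round_add_intCast]
  congr 1
  push_cast
  ring

private lemma le_cbrt {a b : ℝ} (ha : 0 ≤ a) (h : a ^ 3 ≤ b) : a ≤ b ^ ((1:ℝ)/3) := by
  have h1 : a = (a ^ (3:ℕ)) ^ ((1:ℝ)/3) := by
    rw [← Real.rpow_natCast a 3, ← Real.rpow_mul ha]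
    norm_num
  rw [h1]
  exact Real.rpow_le_rpow (pow_nonneg ha 3) h (by norm_num)

set_option maxHeartbeats 2000000 in
/-- the transference step, in the special case
`α = 2/3, β = 1/3`: boundedness of the linear form at best approximations
together with `ζ_ν M_{ν+1}³ ≤ 1` yields membership in `BAD^Θ(2/3,1/3)`. -/
theorem stmt_16 (θ₁ θ₂ : ℝ) (h : LinIndep θ₁ θ₂) (m : ℕ → ℤ × ℤ)
    (hm : IsBestApproxSeq θ₁ θ₂ m)
    (hmink : ∀ ν, zeta θ₁ θ₂ (m ν) * (Mval (m (ν + 1))) ^ 3 ≤ 1)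
    (η₁ η₂ γ : ℝ) (hγ : 0 < γ)
    (hinf : ∀ ν, γ ≤ dni (η₁ * (m ν).1 + η₂ * (m ν).2)) :
    ∃ c > (0 : ℝ), ∀ q : ℕ, 0 < q →
      c ≤ max ((q : ℝ) ^ ((2 : ℝ) / 3) * dni (q * θ₁ - η₁))
            ((q : ℝ) ^ ((1 : ℝ) / 3) * dni (q * θ₂ - η₂)) := by
  obtain ⟨hbaseq, hmono, -⟩ := hm
  have hba : ∀ ν, m ν ≠ 0 := fun ν => (hbaseq ν).1

  -- integer-valued weighted sizes
  set n : ℕ → ℤ := fun ν => max |(m ν).1| ((m ν).2 ^ 2) with hn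
  have hcast : ∀ ν, wsize (m ν) = (n ν : ℝ) := by
    intro ν; unfold wsize; rw [hn]; push_cast; ring_nf
  have hn0 : 1 ≤ n 0 := by
    have h0 := hba 0
    have : (m 0).1 ≠ 0 ∨ (m 0).2 ≠ 0 := by
      by_contra hcc; push_neg at hcc
      exact h0 (Prod.ext hcc.1 hcc.2)
    rcases this with h1 | h2
    · exact le_max_of_le_left (Int.one_le_abs h1)
    · refine le_max_of_le_right ?_
      nlinarith [Int.one_le_abs h2, sq_abs (m 0).2]
  have hws : ∀ ν μ, ν < μ → wsize (m ν) < wsize (m μ) := by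
    intro ν μ hlt
    by_contra hc; push_neg at hc
    have := hmono hlt
    simp only [Mval] at this
    exact absurd this (not_lt.mpr (Real.sqrt_le_sqrt hc))
  have hnmono : ∀ ν, n ν + 1 ≤ n (ν + 1) := by
    intro ν
    have := hws ν (ν+1) (Nat.lt_succ_self ν)
    rw [hcast, hcast] at this
    exact_mod_cast Int.add_one_le_iff.mpr (by exact_mod_cast this)
  have hnge : ∀ ν : ℕ, (ν : ℤ) + 1 ≤ n ν := by
    intro ν
    induction ν with
    | zero => simpa using hn0
    | succ k ih =>
      have := hnmono k
      push_cast
      omega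
  have hwge : ∀ ν : ℕ, (ν : ℝ) + 1 ≤ wsize (m ν) := by
    intro ν; rw [hcast]; exact_mod_cast hnge ν
  have hw1 : ∀ ν, 1 ≤ wsize (m ν) := by
    intro ν
    have := hwge ν
    have h2 : (0:ℝ) ≤ (ν:ℝ) := Nat.cast_nonneg ν
    linarith
  have hM1 : ∀ ν, 1 ≤ Mval (m ν) := by
    intro ν
    have : Real.sqrt 1 ≤ Real.sqrt (wsize (m ν)) := Real.sqrt_le_sqrt (hw1 ν)
    simpa [Real.sqrt_one, Mval] using this
  have hMsq : ∀ ν, Mval (m ν) ^ 2 = wsize (m ν) := by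
    intro ν
    exact Real.sq_sqrt (by linarith [hw1 ν])
  -- constants
  set K : ℝ := 2 / γ with hK
  have hK0 : 0 < K := by positivity
  set M0 : ℝ := Mval (m 0) with hM0def
  have hM0pos : (0:ℝ) < M0 := lt_of_lt_of_le one_pos (hM1 0)
  set K23 : ℝ := K ^ ((2:ℝ)/3) with hK23
  set K13 : ℝ := K ^ ((1:ℝ)/3) with hK13
  have hK23p : 0 < K23 := Real.rpow_pos_of_pos hK0 _
  have hK13p : 0 < K13 := Real.rpow_pos_of_pos hK0 _
  set D : ℝ := K23 + K13 + M0^2 + M0 + 1 with hD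
  have hD0 : 0 < D := by positivity
  refine ⟨γ / (2 * D), by positivity, ?_⟩
  set c : ℝ := γ / (2 * D) with hc
  have hc0 : 0 < c := by positivity
  intro q hq
  by_contra hcon
  push_neg at hcon
  rw [max_lt_iff] at hcon
  obtain ⟨hA, hB⟩ := hcon
  have hq1 : (1:ℝ) ≤ (q:ℝ) := by exact_mod_cast hq
  have hqpos : (0:ℝ) < (q:ℝ) := by linarith
  set q23 : ℝ := (q:ℝ) ^ ((2:ℝ)/3) with hq23d
  set q13 : ℝ := (q:ℝ) ^ ((1:ℝ)/3) with hq13d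
  have hq23 : 1 ≤ q23 := Real.one_le_rpow hq1 (by norm_num)
  have hq13 : 1 ≤ q13 := Real.one_le_rpow hq1 (by norm_num)
  -- choose ν
  obtain ⟨ν, hup, hdown⟩ : ∃ ν : ℕ, K * q < Mval (m (ν + 1)) ^ 3 ∧
      Mval (m ν) ≤ max ((K * q) ^ ((1:ℝ)/3)) M0 := by
    have hex : ∃ ν, K * q < Mval (m ν) ^ 3 := by
      refine ⟨⌈K * (q:ℝ)⌉₊, ?_⟩
      have h1 : K * q ≤ (⌈K * (q:ℝ)⌉₊ : ℝ) := Nat.le_ceil _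
      have h2 : ((⌈K * (q:ℝ)⌉₊ : ℕ) : ℝ) + 1 ≤ wsize (m ⌈K * (q:ℝ)⌉₊) := hwge _
      have h3 : Mval (m ⌈K * (q:ℝ)⌉₊) ^ 2 ≤ Mval (m ⌈K * (q:ℝ)⌉₊) ^ 3 :=
        pow_le_pow_right₀ (hM1 _) (by norm_num)
      rw [hMsq] at h3
      linarith
    rcases Nat.eq_zero_or_pos (Nat.find hex) with h0 | hpos
    · refine ⟨0, ?_, le_max_right _ _⟩
      have hspec := Nat.find_spec hex
      rw [h0] at hspec
      have hmlt : Mval (m 0) < Mval (m 1) := hmono (Nat.lt_succ_self 0)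
      have : Mval (m 0) ^ 3 ≤ Mval (m 1) ^ 3 :=
        pow_le_pow_left₀ (by linarith [hM1 0]) (le_of_lt hmlt) 3
      linarith
    · refine ⟨Nat.find hex - 1, ?_, ?_⟩
      · have he : Nat.find hex - 1 + 1 = Nat.find hex := by omega
        rw [he]
        exact Nat.find_spec hex
      · have hνlt : Nat.find hex - 1 < Nat.find hex := by omega
        have := Nat.find_min hex hνlt
        push_neg at this
        exact le_max_of_le_left (le_cbrt (by linarith [hM1 (Nat.find hex - 1)]) this)
  -- abbreviations
  set M : ℝ := Mval (m ν) with hMdef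
  set ζ : ℝ := zeta θ₁ θ₂ (m ν) with hζdef
  have hζ0 : 0 ≤ ζ := abs_nonneg _
  have hMpos : (0:ℝ) < M := lt_of_lt_of_le one_pos (hM1 ν)
  -- bound on q * ζ
  have hqζ : (q:ℝ) * ζ ≤ γ / 2 := by
    have h1 : ζ * (K * q) ≤ ζ * Mval (m (ν+1)) ^ 3 :=
      mul_le_mul_of_nonneg_left (le_of_lt hup) hζ0
    have h2 := hmink ν
    rw [← hζdef] at h2
    have h3 : ζ * (K * q) ≤ 1 := le_trans h1 h2
    rw [hK] at h3
    have h4 : ζ * (2 / γ * (q:ℝ)) = 2 * ((q:ℝ) * ζ) / γ := by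
      field_simp
    rw [h4] at h3
    have h5 : 2 * ((q:ℝ) * ζ) ≤ γ := (div_le_one hγ).mp h3
    linarith
  -- the congruence computation
  set r1 : ℤ := round ((q:ℝ) * θ₁ - η₁) with hr1
  set r2 : ℤ := round ((q:ℝ) * θ₂ - η₂) with hr2
  set δ1 : ℝ := ((q:ℝ) * θ₁ - η₁) - r1 with hδ1
  set δ2 : ℝ := ((q:ℝ) * θ₂ - η₂) - r2 with hδ2
  have hd1 : dni ((q:ℝ) * θ₁ - η₁) = |δ1| := rfl
  have hd2 : dni ((q:ℝ) * θ₂ - η₂) = |δ2| := rfl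
  set T : ℝ := θ₁ * (m ν).1 + θ₂ * (m ν).2 with hT
  have key : η₁ * (m ν).1 + η₂ * (m ν).2
      = ((q:ℝ) * T - ((m ν).1 * δ1 + (m ν).2 * δ2)) + ((-((m ν).1 * r1 + (m ν).2 * r2) : ℤ) : ℝ) := by
    rw [hδ1, hδ2, hT]
    push_cast
    ring
  have hζeq : dni T = ζ := rfl
  have step1 : γ ≤ (q:ℝ) * ζ + |(((m ν).1 : ℝ)) * δ1 + (((m ν).2 : ℝ)) * δ2| := by
    have h1 := hinf ν
    rw [key, dni_add_int] at h1
    have h2 := dni_le_abs ((q:ℝ) * T - (((m ν).1 : ℝ) * δ1 + ((m ν).2 : ℝ) * δ2)) ((q:ℤ) * round T)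
    have h3 : |((q:ℝ) * T - (((m ν).1:ℝ) * δ1 + ((m ν).2:ℝ) * δ2)) - (((q:ℤ) * round T : ℤ) : ℝ)|
        ≤ (q:ℝ) * ζ + |(((m ν).1:ℝ)) * δ1 + (((m ν).2:ℝ)) * δ2| := by
      have he : ((q:ℝ) * T - (((m ν).1:ℝ) * δ1 + ((m ν).2:ℝ) * δ2)) - (((q:ℤ) * round T : ℤ) : ℝ)
          = (q:ℝ) * (T - round T) - (((m ν).1:ℝ) * δ1 + ((m ν).2:ℝ) * δ2) := by
        push_cast; ring
      rw [he]
      calc |(q:ℝ) * (T - round T) - (((m ν).1:ℝ) * δ1 + ((m ν).2:ℝ) * δ2)|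
          ≤ |(q:ℝ) * (T - round T)| + |(((m ν).1:ℝ)) * δ1 + (((m ν).2:ℝ)) * δ2| := abs_sub _ _
        _ = (q:ℝ) * |T - round T| + |(((m ν).1:ℝ)) * δ1 + (((m ν).2:ℝ)) * δ2| := by
            rw [abs_mul, Nat.abs_cast]
        _ = (q:ℝ) * ζ + |(((m ν).1:ℝ)) * δ1 + (((m ν).2:ℝ)) * δ2| := by rw [← hζeq]; rfl
    linarith
  -- bounds on the m-coordinates
  have hm1 : |((m ν).1 : ℝ)| ≤ M ^ 2 := by
    rw [hMsq]; exact le_max_left _ _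
  have hm2 : |((m ν).2 : ℝ)| ≤ M := by
    have h1 : Real.sqrt (((m ν).2 : ℝ) ^ 2) ≤ Real.sqrt (wsize (m ν)) :=
      Real.sqrt_le_sqrt (le_max_right _ _)
    rwa [Real.sqrt_sq_eq_abs] at h1
  -- bounds on M via the chosen ν
  have hKq0 : (0:ℝ) ≤ K * q := by positivity
  have hA13 : (K * q) ^ ((1:ℝ)/3) = K13 * q13 := by
    rw [hK13, hq13d, ← Real.mul_rpow (le_of_lt hK0) (le_of_lt hqpos)]
  have hA23 : ((K * q) ^ ((1:ℝ)/3)) ^ 2 = K23 * q23 := by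
    rw [← Real.rpow_natCast ((K * q) ^ ((1:ℝ)/3)) 2, ← Real.rpow_mul hKq0]
    norm_num
    rw [hK23, hq23d, ← Real.mul_rpow (le_of_lt hK0) (le_of_lt hqpos)]
  have hMb1 : M ≤ (K13 + M0) * q13 := by
    have h1 : M ≤ (K * q) ^ ((1:ℝ)/3) + M0 :=
      le_trans hdown (max_le (le_add_of_nonneg_right hM0pos.le)
        (le_add_of_nonneg_left (Real.rpow_nonneg hKq0 _)))
    rw [hA13] at h1
    have h2 : (K13 + M0) * q13 = K13 * q13 + M0 * q13 := by ring
    have h3 : M0 * 1 ≤ M0 * q13 := mul_le_mul_of_nonneg_left hq13 hM0pos.le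
    rw [h2]
    linarith
  have hMb2 : M ^ 2 ≤ (K23 + M0 ^ 2) * q23 := by
    have h0 : 0 ≤ max ((K * q) ^ ((1:ℝ)/3)) M0 := le_trans (le_of_lt hM0pos) (le_max_right _ _)
    have h1 : M ^ 2 ≤ (max ((K * q) ^ ((1:ℝ)/3)) M0) ^ 2 :=
      pow_le_pow_left₀ hMpos.le hdown 2
    have h2 : (max ((K * q) ^ ((1:ℝ)/3)) M0) ^ 2 ≤ ((K * q) ^ ((1:ℝ)/3)) ^ 2 + M0 ^ 2 := by
      rcases le_total ((K * q) ^ ((1:ℝ)/3)) M0 with hle | hle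
      · rw [max_eq_right hle]
        linarith [sq_nonneg ((K * (q:ℝ)) ^ ((1:ℝ)/3))]
      · rw [max_eq_left hle]
        linarith [sq_nonneg M0]
    rw [hA23] at h2
    have h3 : (K23 + M0 ^ 2) * q23 = K23 * q23 + M0 ^ 2 * q23 := by ring
    have h4 : M0 ^ 2 * 1 ≤ M0 ^ 2 * q23 := mul_le_mul_of_nonneg_left hq23 (by positivity)
    rw [h3]
    linarith
  -- bounds on the error terms
  have hd1b : q23 * |δ1| ≤ c := by rw [← hd1]; exact le_of_lt hA
  have hd2b : q13 * |δ2| ≤ c := by rw [← hd2]; exact le_of_lt hB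
  have habs : |(((m ν).1:ℝ)) * δ1 + (((m ν).2:ℝ)) * δ2|
      ≤ M^2 * |δ1| + M * |δ2| := by
    calc |(((m ν).1:ℝ)) * δ1 + (((m ν).2:ℝ)) * δ2|
        ≤ |(((m ν).1:ℝ)) * δ1| + |(((m ν).2:ℝ)) * δ2| := abs_add_le _ _
      _ = |((m ν).1:ℝ)| * |δ1| + |((m ν).2:ℝ)| * |δ2| := by rw [abs_mul, abs_mul]
      _ ≤ M^2 * |δ1| + M * |δ2| :=
          add_le_add (mul_le_mul_of_nonneg_right hm1 (abs_nonneg _))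
            (mul_le_mul_of_nonneg_right hm2 (abs_nonneg _))
  have ht1 : M^2 * |δ1| ≤ c * (K23 + M0^2) := by
    have h1 : M^2 * |δ1| ≤ ((K23 + M0^2) * q23) * |δ1| :=
      mul_le_mul_of_nonneg_right hMb2 (abs_nonneg _)
    have h2 : ((K23 + M0^2) * q23) * |δ1| = (K23 + M0^2) * (q23 * |δ1|) := by ring
    have h3 : (K23 + M0^2) * (q23 * |δ1|) ≤ (K23 + M0^2) * c :=
      mul_le_mul_of_nonneg_left hd1b (by positivity)
    linarith
  have ht2 : M * |δ2| ≤ c * (K13 + M0) := by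
    have h1 : M * |δ2| ≤ ((K13 + M0) * q13) * |δ2| :=
      mul_le_mul_of_nonneg_right hMb1 (abs_nonneg _)
    have h3 : (K13 + M0) * (q13 * |δ2|) ≤ (K13 + M0) * c :=
      mul_le_mul_of_nonneg_left hd2b (by positivity)
    have h2 : ((K13 + M0) * q13) * |δ2| = (K13 + M0) * (q13 * |δ2|) := by ring
    have h4 : (K13 + M0) * c = c * (K13 + M0) := by ring
    linarith
  -- conclusion
  have hcD : c * D = γ / 2 := by
    rw [hc]; field_simp
  have hfinal : γ ≤ γ / 2 + c * (K23 + M0^2) + c * (K13 + M0) := by linarith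
  have hexp : c * (K23 + M0^2) + c * (K13 + M0) = c * D - c := by rw [hD]; ring
  linarith
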